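/- arXiv:1412.4155 — 5 statements merged into one kernel-verified Lean document; each statement's English description precedes it below -/
import Mathlib

section
/- Let H be an n×n heptadiagonal matrix (n > 4) with subdiagonals a, b, c, main diagonal d, and superdiagonals e, f, g, where g_{n-2} = g_{n-1} = g_n = 1 and f_{n-1} = f_n = e_n = 0. Let A : Fin (n+3) → ℝ be defined by A_1 = A_2 = 0, A_3 = 1, and for i ≥ 1, a_i A_{i-3} + b_i A_{i-2} + c_i A_{i-1} + d_i A_i + e_i A_{i+1} + f_i A_{i+2} + g_i A_{i+3} = 0 (with out-of-range terms treated as zero), assuming g_i ≠ 0 for 1 ≤ i ≤ n-3 so that A is well-defined. Then the vector 𝐀 = (A_1, …, A_n)ᵗ satisfies H𝐀 = -A_{n+1} E_{n-2} - A_{n+2} E_{n-1} - A_{n+3} E_n, where E_k denotes the k-th standard basis vector of ℝⁿ. -/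
open Matrix

/-- The `n × n` heptadiagonal matrix of (1.1), with 1-indexed diagonal sequences
`a, b, c, d, e, f, g : ℤ → ℝ` (entry `H i j` with `i, j : Fin n` corresponds to
row `i+1`, column `j+1` in the paper's indexing). -/
def heptaMatrix (n : ℕ) (a b c d e f g : ℤ → ℝ) : Matrix (Fin n) (Fin n) ℝ :=
  fun i j =>
    if ((j : ℤ) + 1) = ((i : ℤ) + 1) - 3 then a ((i : ℤ) + 1)
    else if ((j : ℤ) + 1) = ((i : ℤ) + 1) - 2 then b ((i : ℤ) + 1)
    else if ((j : ℤ) + 1) = ((i : ℤ) + 1) - 1 then c ((i : ℤ) + 1)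
    else if ((j : ℤ) + 1) = ((i : ℤ) + 1) then d ((i : ℤ) + 1)
    else if ((j : ℤ) + 1) = ((i : ℤ) + 1) + 1 then e ((i : ℤ) + 1)
    else if ((j : ℤ) + 1) = ((i : ℤ) + 1) + 2 then f ((i : ℤ) + 1)
    else if ((j : ℤ) + 1) = ((i : ℤ) + 1) + 3 then g ((i : ℤ) + 1)
    else 0

/-- `W : ℤ → ℝ` satisfies the seven-term recurrence
`aᵢ W_{i-3} + bᵢ W_{i-2} + cᵢ W_{i-1} + dᵢ Wᵢ + eᵢ W_{i+1} + fᵢ W_{i+2} + gᵢ W_{i+3} = 0`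
for `1 ≤ i ≤ n`, with out-of-range terms (index `≤ 0`) treated as zero. -/
def SevenTermRec (n : ℕ) (a b c d e f g : ℤ → ℝ) (W : ℤ → ℝ) : Prop :=
  (∀ j : ℤ, j ≤ 0 → W j = 0) ∧
  (∀ i : ℤ, 1 ≤ i → i ≤ (n : ℤ) →
    a i * W (i - 3) + b i * W (i - 2) + c i * W (i - 1) + d i * W i +
      e i * W (i + 1) + f i * W (i + 2) + g i * W (i + 3) = 0)

/-- The `k`-th standard basis vector of `ℝⁿ` (1-indexed `k`). -/
def stdBasis (n : ℕ) (k : ℤ) : Fin n → ℝ := fun i => if ((i : ℤ) + 1) = k then 1 else 0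

/-- The 3×3 determinant with rows formed from `A`, `B`, `C` at indices `p`, `q`, `r`. -/
def det3 (A B C : ℤ → ℝ) (p q r : ℤ) : ℝ :=
  Matrix.det !![A p, A q, A r; B p, B q, B r; C p, C q, C r]

/-- The `k`-th column (1-indexed, `1 ≤ k ≤ n`) of a matrix, as a vector; `0` out of range. -/
def matCol (n : ℕ) (M : Matrix (Fin n) (Fin n) ℝ) (k : ℤ) : Fin n → ℝ :=
  fun i => if hk : 1 ≤ k ∧ k ≤ (n : ℤ) then M i ⟨(k - 1).toNat, by omega⟩ else 0

lemma pick_const (c : ℤ) (q : ℝ) (A : ℤ → ℝ) (m : ℤ) :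
    (if m = c then q * A m else 0) = (if m = c then q * A c else 0) := by
  split_ifs with h
  · rw [h]
  · rfl

lemma sum_pick (n : ℕ) (c : ℤ) (x : ℝ) :
    (∑ j : Fin n, if ((j : ℤ) + 1) = c then x else 0)
      = if 1 ≤ c ∧ c ≤ (n : ℤ) then x else 0 := by
  by_cases h : 1 ≤ c ∧ c ≤ (n : ℤ)
  · have hc : (c - 1).toNat < n := by omega
    rw [if_pos h, Finset.sum_eq_single (⟨(c - 1).toNat, hc⟩ : Fin n)]
    · rw [if_pos]
      show ((c - 1).toNat : ℤ) + 1 = c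
      omega
    · intro j _ hj
      rw [if_neg]
      intro hj'
      apply hj
      apply Fin.ext
      simp only [Fin.val_mk]
      omega
    · simp
  · rw [if_neg h, Finset.sum_eq_zero]
    intro j _
    rw [if_neg]
    intro hj
    push_neg at h
    omega

set_option maxHeartbeats 1000000 in
theorem stmt_0 (n : ℕ) (hn : 4 < n) (a b c d e f g A : ℤ → ℝ)
    (hg : ∀ i : ℤ, 1 ≤ i → i ≤ (n : ℤ) - 3 → g i ≠ 0)
    (hg1 : g ((n : ℤ) - 2) = 1) (hg2 : g ((n : ℤ) - 1) = 1) (hg3 : g (n : ℤ) = 1)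
    (hf1 : f ((n : ℤ) - 1) = 0) (hf2 : f (n : ℤ) = 0) (he1 : e (n : ℤ) = 0)
    (hA : SevenTermRec n a b c d e f g A) (hA1 : A 1 = 0) (hA2 : A 2 = 0) (hA3 : A 3 = 1) :
    (heptaMatrix n a b c d e f g).mulVec (fun i => A ((i : ℤ) + 1)) =
      -(A ((n : ℤ) + 1) • stdBasis n ((n : ℤ) - 2))
        - A ((n : ℤ) + 2) • stdBasis n ((n : ℤ) - 1)
        - A ((n : ℤ) + 3) • stdBasis n (n : ℤ) := by
  obtain ⟨hA0, hrec⟩ := hA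
  funext i
  have hk1 : (1 : ℤ) ≤ (i : ℤ) + 1 := by omega
  have hkn : ((i : ℤ) + 1) ≤ (n : ℤ) := by
    have := i.isLt; omega
  set k : ℤ := (i : ℤ) + 1 with hk
  have hterm : ∀ j : Fin n, heptaMatrix n a b c d e f g i j * A ((j : ℤ) + 1) =
      (if ((j : ℤ) + 1) = k - 3 then a k * A ((j : ℤ) + 1) else 0)
    + (if ((j : ℤ) + 1) = k - 2 then b k * A ((j : ℤ) + 1) else 0)
    + (if ((j : ℤ) + 1) = k - 1 then c k * A ((j : ℤ) + 1) else 0)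
    + (if ((j : ℤ) + 1) = k then d k * A ((j : ℤ) + 1) else 0)
    + (if ((j : ℤ) + 1) = k + 1 then e k * A ((j : ℤ) + 1) else 0)
    + (if ((j : ℤ) + 1) = k + 2 then f k * A ((j : ℤ) + 1) else 0)
    + (if ((j : ℤ) + 1) = k + 3 then g k * A ((j : ℤ) + 1) else 0) := by
    intro j
    simp only [heptaMatrix, ← hk]
    split_ifs <;> first | omega | ring
  have hLHS : (heptaMatrix n a b c d e f g).mulVec (fun i => A ((i : ℤ) + 1)) i =
      a k * A (k - 3) + b k * A (k - 2) + c k * A (k - 1) + d k * A k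
      + (if k + 1 ≤ (n : ℤ) then e k * A (k + 1) else 0)
      + (if k + 2 ≤ (n : ℤ) then f k * A (k + 2) else 0)
      + (if k + 3 ≤ (n : ℤ) then g k * A (k + 3) else 0) := by
    simp only [Matrix.mulVec, dotProduct]
    rw [Finset.sum_congr rfl fun j _ => hterm j]
    simp only [Finset.sum_add_distrib]
    have p1 : (∑ x : Fin n, if ((x : ℤ) + 1) = k - 3 then a k * A ((x : ℤ) + 1) else 0)
        = ∑ x : Fin n, if ((x : ℤ) + 1) = k - 3 then a k * A (k - 3) else 0 :=
      Finset.sum_congr rfl fun x _ => pick_const _ _ _ _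
    have p2 : (∑ x : Fin n, if ((x : ℤ) + 1) = k - 2 then b k * A ((x : ℤ) + 1) else 0)
        = ∑ x : Fin n, if ((x : ℤ) + 1) = k - 2 then b k * A (k - 2) else 0 :=
      Finset.sum_congr rfl fun x _ => pick_const _ _ _ _
    have p3 : (∑ x : Fin n, if ((x : ℤ) + 1) = k - 1 then c k * A ((x : ℤ) + 1) else 0)
        = ∑ x : Fin n, if ((x : ℤ) + 1) = k - 1 then c k * A (k - 1) else 0 :=
      Finset.sum_congr rfl fun x _ => pick_const _ _ _ _
    have p4 : (∑ x : Fin n, if ((x : ℤ) + 1) = k then d k * A ((x : ℤ) + 1) else 0)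
        = ∑ x : Fin n, if ((x : ℤ) + 1) = k then d k * A (k) else 0 :=
      Finset.sum_congr rfl fun x _ => pick_const _ _ _ _
    have p5 : (∑ x : Fin n, if ((x : ℤ) + 1) = k + 1 then e k * A ((x : ℤ) + 1) else 0)
        = ∑ x : Fin n, if ((x : ℤ) + 1) = k + 1 then e k * A (k + 1) else 0 :=
      Finset.sum_congr rfl fun x _ => pick_const _ _ _ _
    have p6 : (∑ x : Fin n, if ((x : ℤ) + 1) = k + 2 then f k * A ((x : ℤ) + 1) else 0)
        = ∑ x : Fin n, if ((x : ℤ) + 1) = k + 2 then f k * A (k + 2) else 0 :=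
      Finset.sum_congr rfl fun x _ => pick_const _ _ _ _
    have p7 : (∑ x : Fin n, if ((x : ℤ) + 1) = k + 3 then g k * A ((x : ℤ) + 1) else 0)
        = ∑ x : Fin n, if ((x : ℤ) + 1) = k + 3 then g k * A (k + 3) else 0 :=
      Finset.sum_congr rfl fun x _ => pick_const _ _ _ _
    rw [p1, p2, p3, p4, p5, p6, p7]
    simp only [sum_pick]
    have e1 : (if 1 ≤ k - 3 ∧ k - 3 ≤ (n : ℤ) then a k * A (k - 3) else 0)
        = a k * A (k - 3) := by
      split_ifs with h
      · rfl
      · rw [hA0 (k - 3) (by omega)]; ring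
    have e2 : (if 1 ≤ k - 2 ∧ k - 2 ≤ (n : ℤ) then b k * A (k - 2) else 0)
        = b k * A (k - 2) := by
      split_ifs with h
      · rfl
      · rw [hA0 (k - 2) (by omega)]; ring
    have e3 : (if 1 ≤ k - 1 ∧ k - 1 ≤ (n : ℤ) then c k * A (k - 1) else 0)
        = c k * A (k - 1) := by
      split_ifs with h
      · rfl
      · rw [hA0 (k - 1) (by omega)]; ring
    have e5 : (if 1 ≤ k + 1 ∧ k + 1 ≤ (n : ℤ) then e k * A (k + 1) else 0)
        = if k + 1 ≤ (n : ℤ) then e k * A (k + 1) else 0 := by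
      split_ifs <;> first | rfl | omega
    have e6 : (if 1 ≤ k + 2 ∧ k + 2 ≤ (n : ℤ) then f k * A (k + 2) else 0)
        = if k + 2 ≤ (n : ℤ) then f k * A (k + 2) else 0 := by
      split_ifs <;> first | rfl | omega
    have e7 : (if 1 ≤ k + 3 ∧ k + 3 ≤ (n : ℤ) then g k * A (k + 3) else 0)
        = if k + 3 ≤ (n : ℤ) then g k * A (k + 3) else 0 := by
      split_ifs <;> first | rfl | omega
    rw [e1, e2, e3, e5, e6, e7, if_pos ⟨hk1, hkn⟩]
  rw [hLHS]
  have hr := hrec k hk1 hkn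
  simp only [Pi.sub_apply, Pi.neg_apply, Pi.smul_apply, _root_.stdBasis, smul_eq_mul, ← hk]
  clear_value k
  rcases (show k ≤ (n : ℤ) - 3 ∨ k = (n : ℤ) - 2 ∨ k = (n : ℤ) - 1 ∨ k = (n : ℤ) from by omega) with h | h | h | h
  · rw [if_pos (by omega : k + 1 ≤ (n : ℤ)), if_pos (by omega : k + 2 ≤ (n : ℤ)),
      if_pos (by omega : k + 3 ≤ (n : ℤ)), if_neg (by omega : ¬k = (n : ℤ) - 2),
      if_neg (by omega : ¬k = (n : ℤ) - 1), if_neg (by omega : ¬k = (n : ℤ))]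
    linarith [hr]
  · rw [if_pos (by omega : k + 1 ≤ (n : ℤ)), if_pos (by omega : k + 2 ≤ (n : ℤ)),
      if_neg (by omega : ¬k + 3 ≤ (n : ℤ)), if_pos h,
      if_neg (by omega : ¬k = (n : ℤ) - 1), if_neg (by omega : ¬k = (n : ℤ))]
    rw [show k + 3 = (n : ℤ) + 1 from by omega] at hr
    rw [h, hg1] at hr
    rw [h]
    linarith [hr]
  · rw [if_pos (by omega : k + 1 ≤ (n : ℤ)), if_neg (by omega : ¬k + 2 ≤ (n : ℤ)),
      if_neg (by omega : ¬k + 3 ≤ (n : ℤ)), if_neg (by omega : ¬k = (n : ℤ) - 2),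
      if_pos h, if_neg (by omega : ¬k = (n : ℤ))]
    rw [show k + 2 = (n : ℤ) + 1 from by omega, show k + 3 = (n : ℤ) + 2 from by omega] at hr
    rw [h, hg2, hf1] at hr
    rw [h]
    linarith [hr]
  · rw [if_neg (by omega : ¬k + 1 ≤ (n : ℤ)), if_neg (by omega : ¬k + 2 ≤ (n : ℤ)),
      if_neg (by omega : ¬k + 3 ≤ (n : ℤ)), if_neg (by omega : ¬k = (n : ℤ) - 2),
      if_neg (by omega : ¬k = (n : ℤ) - 1), if_pos h]
    rw [show k + 1 = (n : ℤ) + 1 from by omega, show k + 2 = (n : ℤ) + 2 from by omega,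
      show k + 3 = (n : ℤ) + 3 from by omega] at hr
    rw [h, hg3, hf2, he1] at hr
    rw [h]
    linarith [hr]
end

section
/- With H as above and the three sequences A, B, C defined by the same seven-term recurrence a_i X_{i-3} + b_i X_{i-2} + c_i X_{i-1} + d_i X_i + e_i X_{i+1} + f_i X_{i+2} + g_i X_{i+3} = 0 for 1 ≤ i ≤ n but with initial conditions (A_1, A_2, A_3) = (0,0,1), (B_1, B_2, B_3) = (0,1,0), (C_1, C_2, C_3) = (1,0,0), define for 1 ≤ i ≤ n the 3×3 determinant X_i = det [[A_i, A_{n+2}, A_{n+3}], [B_i, B_{n+2}, B_{n+3}], [C_i, C_{n+2}, C_{n+3}]]. Then the vector 𝐗 = (X_1, …, X_n)ᵗ satisfies H𝐗 = -X_{n+1} E_{n-2}, where X_{n+1} = det [[A_{n+1}, A_{n+2}, A_{n+3}], [B_{n+1}, B_{n+2}, B_{n+3}], [C_{n+1}, C_{n+2}, C_{n+3}]] and E_{n-2} is the (n-2)-th standard basis vector. -/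
open Matrix

lemma det3_expand (A B C : ℤ → ℝ) (p q r : ℤ) :
    det3 A B C p q r = (B q * C r - B r * C q) * A p
      - (A q * C r - A r * C q) * B p + (A q * B r - A r * B q) * C p := by
  simp [det3, Matrix.det_fin_three]; ring

lemma sum_ind (n : ℕ) (k : ℤ) (c : ℝ) (X : ℤ → ℝ) :
    (∑ j : Fin n, (if ((j:ℤ)+1) = k then c else 0) * X ((j:ℤ)+1))
      = if 1 ≤ k ∧ k ≤ (n:ℤ) then c * X k else 0 := by
  by_cases h : 1 ≤ k ∧ k ≤ (n:ℤ)
  · rw [if_pos h]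
    have hk : (k-1).toNat < n := by omega
    rw [Finset.sum_eq_single (⟨(k-1).toNat, hk⟩ : Fin n)]
    · have h2 : ((⟨(k-1).toNat, hk⟩ : Fin n) : ℤ) + 1 = k := by simp; omega
      rw [h2, if_pos rfl]
    · intro j _ hj
      rw [if_neg, zero_mul]
      intro hc
      exact hj (Fin.ext (by simp at hc ⊢; omega))
    · intro h'; exact absurd (Finset.mem_univ _) h'
  · rw [if_neg h]
    apply Finset.sum_eq_zero
    intro j _
    rw [if_neg, zero_mul]
    intro hc; have := j.isLt; omega

lemma hepta_split (n : ℕ) (a b c d e f g : ℤ → ℝ) (i j : Fin n) :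
    heptaMatrix n a b c d e f g i j =
      (if ((j:ℤ)+1) = ((i:ℤ)+1) - 3 then a ((i:ℤ)+1) else 0)
    + (if ((j:ℤ)+1) = ((i:ℤ)+1) - 2 then b ((i:ℤ)+1) else 0)
    + (if ((j:ℤ)+1) = ((i:ℤ)+1) - 1 then c ((i:ℤ)+1) else 0)
    + (if ((j:ℤ)+1) = ((i:ℤ)+1) then d ((i:ℤ)+1) else 0)
    + (if ((j:ℤ)+1) = ((i:ℤ)+1) + 1 then e ((i:ℤ)+1) else 0)
    + (if ((j:ℤ)+1) = ((i:ℤ)+1) + 2 then f ((i:ℤ)+1) else 0)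
    + (if ((j:ℤ)+1) = ((i:ℤ)+1) + 3 then g ((i:ℤ)+1) else 0) := by
  unfold heptaMatrix
  split_ifs <;> first | omega | ring

theorem stmt_1 (n : ℕ) (hn : 4 < n) (a b c d e f g A B C : ℤ → ℝ)
    (hg : ∀ i : ℤ, 1 ≤ i → i ≤ (n : ℤ) - 3 → g i ≠ 0)
    (hg1 : g ((n : ℤ) - 2) = 1) (hg2 : g ((n : ℤ) - 1) = 1) (hg3 : g (n : ℤ) = 1)
    (hf1 : f ((n : ℤ) - 1) = 0) (hf2 : f (n : ℤ) = 0) (he1 : e (n : ℤ) = 0)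
    (hA : SevenTermRec n a b c d e f g A) (hA1 : A 1 = 0) (hA2 : A 2 = 0) (hA3 : A 3 = 1)
    (hB : SevenTermRec n a b c d e f g B) (hB1 : B 1 = 0) (hB2 : B 2 = 1) (hB3 : B 3 = 0)
    (hC : SevenTermRec n a b c d e f g C) (hC1 : C 1 = 1) (hC2 : C 2 = 0) (hC3 : C 3 = 0) :
    (heptaMatrix n a b c d e f g).mulVec
        (fun i => det3 A B C ((i : ℤ) + 1) ((n : ℤ) + 2) ((n : ℤ) + 3)) =
      -(det3 A B C ((n : ℤ) + 1) ((n : ℤ) + 2) ((n : ℤ) + 3) • stdBasis n ((n : ℤ) - 2)) := by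
  set X : ℤ → ℝ := fun p => det3 A B C p ((n:ℤ)+2) ((n:ℤ)+3) with hXdef
  have hX0 : ∀ p : ℤ, p ≤ 0 → X p = 0 := by
    intro p hp
    simp only [hXdef, det3_expand, hA.1 p hp, hB.1 p hp, hC.1 p hp]
    ring
  have hrecX : ∀ i : ℤ, 1 ≤ i → i ≤ (n:ℤ) →
      a i * X (i - 3) + b i * X (i - 2) + c i * X (i - 1) + d i * X i +
        e i * X (i + 1) + f i * X (i + 2) + g i * X (i + 3) = 0 := by
    intro i h1 h2
    simp only [hXdef, det3_expand]
    linear_combination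
      (B ((n:ℤ)+2) * C ((n:ℤ)+3) - B ((n:ℤ)+3) * C ((n:ℤ)+2)) * hA.2 i h1 h2
      - (A ((n:ℤ)+2) * C ((n:ℤ)+3) - A ((n:ℤ)+3) * C ((n:ℤ)+2)) * hB.2 i h1 h2
      + (A ((n:ℤ)+2) * B ((n:ℤ)+3) - A ((n:ℤ)+3) * B ((n:ℤ)+2)) * hC.2 i h1 h2
  have hT : ∀ (co : ℝ) (k : ℤ), k ≤ (n:ℤ) →
      (if 1 ≤ k ∧ k ≤ (n:ℤ) then co * X k else 0) = co * X k := by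
    intro co k hk
    by_cases h : 1 ≤ k
    · rw [if_pos ⟨h, hk⟩]
    · rw [if_neg (by omega), hX0 k (by omega), mul_zero]
  have hX2 : X ((n:ℤ)+2) = 0 := by simp only [hXdef, det3_expand]; ring
  have hX3 : X ((n:ℤ)+3) = 0 := by simp only [hXdef, det3_expand]; ring
  funext i
  have hi : (i : ℕ) < n := i.isLt
  show (∑ j : Fin n, heptaMatrix n a b c d e f g i j * X ((j:ℤ)+1)) = _
  simp only [hepta_split, add_mul, Finset.sum_add_distrib, sum_ind]
  simp only [Pi.neg_apply, Pi.smul_apply, smul_eq_mul, _root_.stdBasis]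
  rcases (show (i:ℤ)+1 ≤ (n:ℤ)-3 ∨ (i:ℤ)+1 = (n:ℤ)-2 ∨ (i:ℤ)+1 = (n:ℤ)-1 ∨ (i:ℤ)+1 = (n:ℤ)
      by omega) with h | h | h | h
  · rw [hT _ _ (by omega), hT _ _ (by omega), hT _ _ (by omega), hT _ _ (by omega),
      hT _ _ (by omega), hT _ _ (by omega), hT _ _ (by omega), if_neg (by omega)]
    linear_combination hrecX ((i:ℤ)+1) (by omega) (by omega)
  · rw [h]
    have hrec := hrecX ((n:ℤ)-2) (by omega) (by omega)
    rw [hg1] at hrec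
    rw [hT _ _ (by omega), hT _ _ (by omega), hT _ _ (by omega), hT _ _ (by omega),
      hT _ _ (by omega), hT _ _ (by omega), if_neg (by omega), if_pos rfl,
      show ((n:ℤ)+1) = (n:ℤ)-2+3 from by ring]
    linear_combination hrec
  · rw [h]
    have hrec := hrecX ((n:ℤ)-1) (by omega) (by omega)
    rw [hf1, hg2, show ((n:ℤ)-1+3) = (n:ℤ)+2 from by ring, hX2] at hrec
    rw [hT _ _ (by omega), hT _ _ (by omega), hT _ _ (by omega), hT _ _ (by omega),
      hT _ _ (by omega), if_neg (by omega), if_neg (by omega), if_neg (by omega)]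
    linear_combination hrec
  · rw [h]
    have hrec := hrecX (n:ℤ) (by omega) (by omega)
    rw [he1, hf2, hg3, show ((n:ℤ)+3) = (n:ℤ)+3 from rfl, hX3] at hrec
    rw [hT _ _ (by omega), hT _ _ (by omega), hT _ _ (by omega), hT _ _ (by omega),
      if_neg (by omega), if_neg (by omega), if_neg (by omega), if_neg (by omega)]
    linear_combination hrec
end

section
/- With H, A, B, C as above, define Y_i = det [[A_i, A_{n+1}, A_{n+3}], [B_i, B_{n+1}, B_{n+3}], [C_i, C_{n+1}, C_{n+3}]] for 1 ≤ i ≤ n. Then the vector 𝐘 = (Y_1, …, Y_n)ᵗ satisfies H𝐘 = -Y_{n+2} E_{n-1}, where Y_{n+2} = det [[A_{n+2}, A_{n+1}, A_{n+3}], [B_{n+2}, B_{n+1}, B_{n+3}], [C_{n+2}, C_{n+1}, C_{n+3}]]. -/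
open Matrix

lemma sum_ite_col (n : ℕ) (k : ℤ) (v : ℝ) :
    (∑ j : Fin n, if ((j : ℤ) + 1) = k then v else 0) =
      if 1 ≤ k ∧ k ≤ (n : ℤ) then v else 0 := by
  by_cases h : 1 ≤ k ∧ k ≤ (n : ℤ)
  · rw [if_pos h, Finset.sum_eq_single (⟨(k - 1).toNat, by omega⟩ : Fin n)]
    · rw [if_pos (by simp; omega)]
    · intro j _ hj
      rw [if_neg]
      intro hc
      exact hj (Fin.ext (by simp only [Fin.val_mk]; omega))
    · simp
  · rw [if_neg h]
    exact Finset.sum_eq_zero fun j _ => if_neg (by omega)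

lemma entry_split (n : ℕ) (a b c d e f g : ℤ → ℝ) (W : ℤ → ℝ) (i j : Fin n) :
    heptaMatrix n a b c d e f g i j * W ((j : ℤ) + 1) =
      (if ((j : ℤ) + 1) = ((i : ℤ) + 1) - 3 then a ((i : ℤ) + 1) * W (((i : ℤ) + 1) - 3) else 0)
      + (if ((j : ℤ) + 1) = ((i : ℤ) + 1) - 2 then b ((i : ℤ) + 1) * W (((i : ℤ) + 1) - 2) else 0)
      + (if ((j : ℤ) + 1) = ((i : ℤ) + 1) - 1 then c ((i : ℤ) + 1) * W (((i : ℤ) + 1) - 1) else 0)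
      + (if ((j : ℤ) + 1) = ((i : ℤ) + 1) then d ((i : ℤ) + 1) * W ((i : ℤ) + 1) else 0)
      + (if ((j : ℤ) + 1) = ((i : ℤ) + 1) + 1 then e ((i : ℤ) + 1) * W (((i : ℤ) + 1) + 1) else 0)
      + (if ((j : ℤ) + 1) = ((i : ℤ) + 1) + 2 then f ((i : ℤ) + 1) * W (((i : ℤ) + 1) + 2) else 0)
      + (if ((j : ℤ) + 1) = ((i : ℤ) + 1) + 3 then g ((i : ℤ) + 1) * W (((i : ℤ) + 1) + 3) else 0) := by
  unfold heptaMatrix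
  split_ifs <;>
    (try simp only [add_zero, zero_add, zero_mul]) <;>
    first
      | rfl
      | (exfalso; omega)
      | (congr 2 <;> omega)

lemma row_sum (n : ℕ) (a b c d e f g : ℤ → ℝ) (W : ℤ → ℝ)
    (hW : SevenTermRec n a b c d e f g W) (i : Fin n) :
    (∑ j : Fin n, heptaMatrix n a b c d e f g i j * W ((j : ℤ) + 1)) =
      -((if (n : ℤ) < (i : ℤ) + 2 then e ((i : ℤ) + 1) * W ((i : ℤ) + 2) else 0)
        + (if (n : ℤ) < (i : ℤ) + 3 then f ((i : ℤ) + 1) * W ((i : ℤ) + 3) else 0)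
        + (if (n : ℤ) < (i : ℤ) + 4 then g ((i : ℤ) + 1) * W ((i : ℤ) + 4) else 0)) := by
  have hi1 : (1 : ℤ) ≤ (i : ℤ) + 1 := by omega
  have hin : (i : ℤ) + 1 ≤ (n : ℤ) := by have := i.isLt; omega
  set I : ℤ := (i : ℤ) + 1 with hI
  have hrec := hW.2 I hi1 hin
  simp_rw [entry_split n a b c d e f g W i, Finset.sum_add_distrib, sum_ite_col]
  have e1 : (if 1 ≤ I - 3 ∧ I - 3 ≤ (n : ℤ) then a I * W (I - 3) else 0) = a I * W (I - 3) := by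
    split_ifs with h
    · rfl
    · rw [hW.1 (I - 3) (by omega)]; ring
  have e2 : (if 1 ≤ I - 2 ∧ I - 2 ≤ (n : ℤ) then b I * W (I - 2) else 0) = b I * W (I - 2) := by
    split_ifs with h
    · rfl
    · rw [hW.1 (I - 2) (by omega)]; ring
  have e3 : (if 1 ≤ I - 1 ∧ I - 1 ≤ (n : ℤ) then c I * W (I - 1) else 0) = c I * W (I - 1) := by
    split_ifs with h
    · rfl
    · rw [hW.1 (I - 1) (by omega)]; ring
  have e4 : (if 1 ≤ I ∧ I ≤ (n : ℤ) then d I * W I else 0) = d I * W I := if_pos ⟨hi1, hin⟩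
  have e5 : (if 1 ≤ I + 1 ∧ I + 1 ≤ (n : ℤ) then e I * W (I + 1) else 0) =
      e I * W (I + 1) - (if (n : ℤ) < I + 1 then e I * W (I + 1) else 0) := by
    by_cases h : I + 1 ≤ (n : ℤ)
    · rw [if_pos ⟨by omega, h⟩, if_neg (by omega)]; ring
    · rw [if_neg (by omega), if_pos (by omega)]; ring
  have e6 : (if 1 ≤ I + 2 ∧ I + 2 ≤ (n : ℤ) then f I * W (I + 2) else 0) =
      f I * W (I + 2) - (if (n : ℤ) < I + 2 then f I * W (I + 2) else 0) := by
    by_cases h : I + 2 ≤ (n : ℤ)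
    · rw [if_pos ⟨by omega, h⟩, if_neg (by omega)]; ring
    · rw [if_neg (by omega), if_pos (by omega)]; ring
  have e7 : (if 1 ≤ I + 3 ∧ I + 3 ≤ (n : ℤ) then g I * W (I + 3) else 0) =
      g I * W (I + 3) - (if (n : ℤ) < I + 3 then g I * W (I + 3) else 0) := by
    by_cases h : I + 3 ≤ (n : ℤ)
    · rw [if_pos ⟨by omega, h⟩, if_neg (by omega)]; ring
    · rw [if_neg (by omega), if_pos (by omega)]; ring
  have harg1 : (i : ℤ) + 2 = I + 1 := by omega
  have harg2 : (i : ℤ) + 3 = I + 2 := by omega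
  have harg3 : (i : ℤ) + 4 = I + 3 := by omega
  rw [e1, e2, e3, e4, e5, e6, e7, harg1, harg2, harg3]
  linarith [hrec]

theorem stmt_2 (n : ℕ) (hn : 4 < n) (a b c d e f g A B C : ℤ → ℝ)
    (hg : ∀ i : ℤ, 1 ≤ i → i ≤ (n : ℤ) - 3 → g i ≠ 0)
    (hg1 : g ((n : ℤ) - 2) = 1) (hg2 : g ((n : ℤ) - 1) = 1) (hg3 : g (n : ℤ) = 1)
    (hf1 : f ((n : ℤ) - 1) = 0) (hf2 : f (n : ℤ) = 0) (he1 : e (n : ℤ) = 0)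
    (hA : SevenTermRec n a b c d e f g A) (hA1 : A 1 = 0) (hA2 : A 2 = 0) (hA3 : A 3 = 1)
    (hB : SevenTermRec n a b c d e f g B) (hB1 : B 1 = 0) (hB2 : B 2 = 1) (hB3 : B 3 = 0)
    (hC : SevenTermRec n a b c d e f g C) (hC1 : C 1 = 1) (hC2 : C 2 = 0) (hC3 : C 3 = 0) :
    (heptaMatrix n a b c d e f g).mulVec
        (fun i => det3 A B C ((i : ℤ) + 1) ((n : ℤ) + 1) ((n : ℤ) + 3)) =
      -(det3 A B C ((n : ℤ) + 2) ((n : ℤ) + 1) ((n : ℤ) + 3) • stdBasis n ((n : ℤ) - 1)) := by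
  funext i
  have hiv := i.isLt
  set α : ℝ := B ((n : ℤ) + 1) * C ((n : ℤ) + 3) - B ((n : ℤ) + 3) * C ((n : ℤ) + 1) with hα
  set β : ℝ := A ((n : ℤ) + 1) * C ((n : ℤ) + 3) - A ((n : ℤ) + 3) * C ((n : ℤ) + 1) with hβ
  set γ : ℝ := A ((n : ℤ) + 1) * B ((n : ℤ) + 3) - A ((n : ℤ) + 3) * B ((n : ℤ) + 1) with hγ
  have hexp : ∀ p : ℤ, det3 A B C p ((n : ℤ) + 1) ((n : ℤ) + 3) =
      A p * α - B p * β + C p * γ := by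
    intro p
    rw [hα, hβ, hγ]
    simp [det3, Matrix.det_fin_three]
    ring
  simp only [Matrix.mulVec, dotProduct, Pi.neg_apply, Pi.smul_apply, smul_eq_mul, _root_.stdBasis]
  have hsplit : (∑ j : Fin n, heptaMatrix n a b c d e f g i j *
        det3 A B C ((j : ℤ) + 1) ((n : ℤ) + 1) ((n : ℤ) + 3)) =
      (∑ j : Fin n, heptaMatrix n a b c d e f g i j * A ((j : ℤ) + 1)) * α
      - (∑ j : Fin n, heptaMatrix n a b c d e f g i j * B ((j : ℤ) + 1)) * β
      + (∑ j : Fin n, heptaMatrix n a b c d e f g i j * C ((j : ℤ) + 1)) * γ := by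
    rw [Finset.sum_mul, Finset.sum_mul, Finset.sum_mul, ← Finset.sum_sub_distrib,
      ← Finset.sum_add_distrib]
    exact Finset.sum_congr rfl fun j _ => by rw [hexp]; ring
  rw [hsplit, row_sum n a b c d e f g A hA i, row_sum n a b c d e f g B hB i,
    row_sum n a b c d e f g C hC i]
  by_cases h4 : (i : ℤ) + 1 = (n : ℤ)
  · have c1 : (n : ℤ) < (i : ℤ) + 2 := by omega
    have c2 : (n : ℤ) < (i : ℤ) + 3 := by omega
    have c3 : (n : ℤ) < (i : ℤ) + 4 := by omega
    have c4 : ¬((i : ℤ) + 1 = (n : ℤ) - 1) := by omega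
    simp only [if_pos c1, if_pos c2, if_pos c3, if_neg c4]
    rw [show (i : ℤ) + 2 = (n : ℤ) + 1 from by omega,
      show (i : ℤ) + 3 = (n : ℤ) + 2 from by omega,
      show (i : ℤ) + 4 = (n : ℤ) + 3 from by omega, h4, he1, hf2, hg3]
    rw [hα, hβ, hγ]
    ring
  · by_cases h3 : (i : ℤ) + 1 = (n : ℤ) - 1
    · have c1 : ¬((n : ℤ) < (i : ℤ) + 2) := by omega
      have c2 : (n : ℤ) < (i : ℤ) + 3 := by omega
      have c3 : (n : ℤ) < (i : ℤ) + 4 := by omega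
      simp only [if_pos c2, if_pos c3, if_neg c1, if_pos h3]
      rw [show (i : ℤ) + 3 = (n : ℤ) + 1 from by omega,
        show (i : ℤ) + 4 = (n : ℤ) + 2 from by omega, h3, hf1, hg2, hexp ((n : ℤ) + 2)]
      ring
    · by_cases h2 : (i : ℤ) + 1 = (n : ℤ) - 2
      · have c1 : ¬((n : ℤ) < (i : ℤ) + 2) := by omega
        have c2 : ¬((n : ℤ) < (i : ℤ) + 3) := by omega
        have c3 : (n : ℤ) < (i : ℤ) + 4 := by omega
        have c4 : ¬((i : ℤ) + 1 = (n : ℤ) - 1) := by omega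
        simp only [if_pos c3, if_neg c1, if_neg c2, if_neg c4]
        rw [show (i : ℤ) + 4 = (n : ℤ) + 1 from by omega, h2, hg1]
        rw [hα, hβ, hγ]
        ring
      · have c1 : ¬((n : ℤ) < (i : ℤ) + 2) := by omega
        have c2 : ¬((n : ℤ) < (i : ℤ) + 3) := by omega
        have c3 : ¬((n : ℤ) < (i : ℤ) + 4) := by omega
        have c4 : ¬((i : ℤ) + 1 = (n : ℤ) - 1) := by omega
        simp only [if_neg c1, if_neg c2, if_neg c3, if_neg c4]
        ring
end

section
/- With H, A, B, C as above, define Z_i = det [[A_i, A_{n+1}, A_{n+2}], [B_i, B_{n+1}, B_{n+2}], [C_i, C_{n+1}, C_{n+2}]] for 1 ≤ i ≤ n. Then the vector 𝐙 = (Z_1, …, Z_n)ᵗ satisfies H𝐙 = -Z_{n+3} E_n, where Z_{n+3} = det [[A_{n+3}, A_{n+1}, A_{n+2}], [B_{n+3}, B_{n+1}, B_{n+2}], [C_{n+3}, C_{n+1}, C_{n+2}]]. -/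
open Matrix

/-! Each `Z_p = det3 A B C p (n+1) (n+2)` is, by cofactor expansion along its first column, a
fixed linear combination of `A_p, B_p, C_p`, so `Z` solves the same seven-term recurrence; it also
vanishes at `p = n+1, n+2`, where two columns coincide. Row `i` of `H Z` is the recurrence at `i`
with the terms of index `> n` dropped, and of these only `g_n Z_{n+3}`, in the last row, is
nonzero. -/

namespace SevenTermRec

variable {n : ℕ} {a b c d e f g W V : ℤ → ℝ}

theorem add (hW : SevenTermRec n a b c d e f g W) (hV : SevenTermRec n a b c d e f g V) :
    SevenTermRec n a b c d e f g (W + V) := by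
  refine ⟨fun j hj => by simp [hW.1 j hj, hV.1 j hj], fun i h1 h2 => ?_⟩
  simp only [Pi.add_apply]
  linear_combination hW.2 i h1 h2 + hV.2 i h1 h2

theorem const_smul (r : ℝ) (hW : SevenTermRec n a b c d e f g W) :
    SevenTermRec n a b c d e f g (r • W) := by
  refine ⟨fun j hj => by simp [hW.1 j hj], fun i h1 h2 => ?_⟩
  simp only [Pi.smul_apply, smul_eq_mul]
  linear_combination r * hW.2 i h1 h2

end SevenTermRec

theorem det3_eq_cofactor_expansion (A B C : ℤ → ℝ) (q r : ℤ) :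
    (fun p => det3 A B C p q r) =
      (B q * C r - C q * B r) • A + (C q * A r - A q * C r) • B +
        (A q * B r - B q * A r) • C := by
  funext p
  simp [det3, det_fin_three]
  ring

theorem SevenTermRec.det3 {n : ℕ} {a b c d e f g A B C : ℤ → ℝ} (q r : ℤ)
    (hA : SevenTermRec n a b c d e f g A) (hB : SevenTermRec n a b c d e f g B)
    (hC : SevenTermRec n a b c d e f g C) :
    SevenTermRec n a b c d e f g (fun p => det3 A B C p q r) := by
  rw [det3_eq_cofactor_expansion]
  exact ((hA.const_smul _).add (hB.const_smul _)).add (hC.const_smul _)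

theorem det3_self_left (A B C : ℤ → ℝ) (q r : ℤ) : det3 A B C q q r = 0 := by
  simp [det3, det_fin_three]

theorem det3_self_right (A B C : ℤ → ℝ) (q r : ℤ) : det3 A B C r q r = 0 := by
  simp [det3, det_fin_three]

theorem heptaMatrix_row (n : ℕ) (a b c d e f g : ℤ → ℝ) (i : Fin n) :
    heptaMatrix n a b c d e f g i =
      let m : ℤ := (i : ℤ) + 1
      a m • stdBasis n (m - 3) + b m • stdBasis n (m - 2) + c m • stdBasis n (m - 1) +
        d m • stdBasis n m + e m • stdBasis n (m + 1) + f m • stdBasis n (m + 2) +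
        g m • stdBasis n (m + 3) := by
  funext j
  simp only [heptaMatrix, _root_.stdBasis, Pi.add_apply, Pi.smul_apply, smul_eq_mul, mul_ite,
    mul_one, mul_zero]
  split_ifs <;> first | omega | ring

theorem stdBasis_dotProduct {n : ℕ} {V : ℤ → ℝ} (hV : ∀ k, k ≤ 0 ∨ (n : ℤ) < k → V k = 0)
    (k : ℤ) : stdBasis n k ⬝ᵥ (fun j => V ((j : ℤ) + 1)) = V k := by
  simp only [dotProduct, _root_.stdBasis, ite_mul, one_mul, zero_mul]
  by_cases hk : 1 ≤ k ∧ k ≤ n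
  · rw [Finset.sum_eq_single ⟨(k - 1).toNat, by omega⟩]
    · simp only [if_pos (by omega : (((k - 1).toNat : ℕ) : ℤ) + 1 = k)]
      congr 1; omega
    · exact fun j _ hj => if_neg fun h => hj (Fin.ext (by dsimp only; omega))
    · simp
  · rw [hV k (by omega)]
    exact Finset.sum_eq_zero fun j _ => if_neg (by omega)

theorem heptaMatrix_mulVec_apply {n : ℕ} (a b c d e f g : ℤ → ℝ) {V : ℤ → ℝ}
    (hV : ∀ k, k ≤ 0 ∨ (n : ℤ) < k → V k = 0) (i : Fin n) :
    (heptaMatrix n a b c d e f g *ᵥ fun j => V ((j : ℤ) + 1)) i =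
      let m : ℤ := (i : ℤ) + 1
      a m * V (m - 3) + b m * V (m - 2) + c m * V (m - 1) + d m * V m +
        e m * V (m + 1) + f m * V (m + 2) + g m * V (m + 3) := by
  simp only [mulVec, heptaMatrix_row, add_dotProduct, smul_dotProduct, stdBasis_dotProduct hV,
    smul_eq_mul]

theorem heptaMatrix_mulVec_of_sevenTermRec {n : ℕ} {a b c d e f g W : ℤ → ℝ}
    (hW : SevenTermRec n a b c d e f g W) (h1 : W ((n : ℤ) + 1) = 0)
    (h2 : W ((n : ℤ) + 2) = 0) :
    heptaMatrix n a b c d e f g *ᵥ (fun i => W ((i : ℤ) + 1)) =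
      -((g n * W ((n : ℤ) + 3)) • stdBasis n n) := by
  set V : ℤ → ℝ := fun k => if k ≤ n then W k else 0
  have hV : ∀ k, k ≤ 0 ∨ (n : ℤ) < k → V k = 0 := by
    rintro k (hk | hk)
    · simp only [V, hW.1 k hk, ite_self]
    · exact if_neg (by omega)
  have hVW : ∀ k ≤ (n : ℤ) + 2, V k = W k := by
    intro k hk
    by_cases hkn : k ≤ n
    · exact if_pos hkn
    · obtain rfl | rfl : k = n + 1 ∨ k = n + 2 := by omega
      · rw [h1]; exact if_neg hkn
      · rw [h2]; exact if_neg hkn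
  have hWV : (fun i : Fin n => W ((i : ℤ) + 1)) = fun i : Fin n => V ((i : ℤ) + 1) :=
    funext fun i => (hVW _ (by omega)).symm
  ext i
  have hrec := hW.2 ((i : ℤ) + 1) (by omega) (by omega)
  rw [hWV, heptaMatrix_mulVec_apply a b c d e f g hV]
  simp only [Pi.neg_apply, Pi.smul_apply, smul_eq_mul, _root_.stdBasis]
  rcases (by omega : (i : ℤ) + 1 < n ∨ (i : ℤ) + 1 = n) with hi | hi
  · simp (disch := omega) only [hVW, if_neg hi.ne]
    linear_combination hrec
  · simp (disch := omega) only [hVW, hV ((i : ℤ) + 1 + 3), if_pos hi]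
    rw [hi] at hrec ⊢
    linear_combination hrec

theorem stmt_3_general (n : ℕ) (a b c d e f g A B C : ℤ → ℝ)
    (hg3 : g (n : ℤ) = 1)
    (hA : SevenTermRec n a b c d e f g A)
    (hB : SevenTermRec n a b c d e f g B)
    (hC : SevenTermRec n a b c d e f g C) :
    (heptaMatrix n a b c d e f g).mulVec
        (fun i => det3 A B C ((i : ℤ) + 1) ((n : ℤ) + 1) ((n : ℤ) + 2)) =
      -(det3 A B C ((n : ℤ) + 3) ((n : ℤ) + 1) ((n : ℤ) + 2) • stdBasis n (n : ℤ)) := by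
  rw [heptaMatrix_mulVec_of_sevenTermRec (hA.det3 _ _ hB hC) (det3_self_left A B C _ _)
    (det3_self_right A B C _ _), hg3, one_mul]

theorem stmt_3 (n : ℕ) (hn : 4 < n) (a b c d e f g A B C : ℤ → ℝ)
    (hg : ∀ i : ℤ, 1 ≤ i → i ≤ (n : ℤ) - 3 → g i ≠ 0)
    (hg1 : g ((n : ℤ) - 2) = 1) (hg2 : g ((n : ℤ) - 1) = 1) (hg3 : g (n : ℤ) = 1)
    (hf1 : f ((n : ℤ) - 1) = 0) (hf2 : f (n : ℤ) = 0) (he1 : e (n : ℤ) = 0)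
    (hA : SevenTermRec n a b c d e f g A) (hA1 : A 1 = 0) (hA2 : A 2 = 0) (hA3 : A 3 = 1)
    (hB : SevenTermRec n a b c d e f g B) (hB1 : B 1 = 0) (hB2 : B 2 = 1) (hB3 : B 3 = 0)
    (hC : SevenTermRec n a b c d e f g C) (hC1 : C 1 = 1) (hC2 : C 2 = 0) (hC3 : C 3 = 0) :
    (heptaMatrix n a b c d e f g).mulVec
        (fun i => det3 A B C ((i : ℤ) + 1) ((n : ℤ) + 1) ((n : ℤ) + 2)) =
      -(det3 A B C ((n : ℤ) + 3) ((n : ℤ) + 1) ((n : ℤ) + 2) • stdBasis n (n : ℤ)) :=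
  stmt_3_general n a b c d e f g A B C hg3 hA hB hC
end

section
/- Let H be an n×n heptadiagonal matrix (n > 4) with g_i ≠ 0 for 1 ≤ i ≤ n-3, g_{n-2} = g_{n-1} = g_n = 1, f_{n-1} = f_n = e_n = 0, and let A, B, C, X be as above. If X_{n+1} = 0, then H is singular (det H = 0). -/
open Matrix

/-- The row pattern of the heptadiagonal matrix, as a function of the (1-indexed)
column index `k`, for row `I` (1-indexed). -/
def rowFun (a b c d e f g : ℤ → ℝ) (I : ℤ) : ℤ → ℝ := fun k =>
  if k = I - 3 then a I
  else if k = I - 2 then b I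
  else if k = I - 1 then c I
  else if k = I then d I
  else if k = I + 1 then e I
  else if k = I + 2 then f I
  else if k = I + 3 then g I
  else 0

lemma rowFun_m3 (a b c d e f g : ℤ → ℝ) (I : ℤ) : rowFun a b c d e f g I (I - 3) = a I := by
  unfold rowFun; rw [if_pos rfl]

lemma rowFun_m2 (a b c d e f g : ℤ → ℝ) (I : ℤ) : rowFun a b c d e f g I (I - 2) = b I := by
  unfold rowFun; rw [if_neg (by omega), if_pos rfl]

lemma rowFun_m1 (a b c d e f g : ℤ → ℝ) (I : ℤ) : rowFun a b c d e f g I (I - 1) = c I := by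
  unfold rowFun; rw [if_neg (by omega), if_neg (by omega), if_pos rfl]

lemma rowFun_0 (a b c d e f g : ℤ → ℝ) (I : ℤ) : rowFun a b c d e f g I I = d I := by
  unfold rowFun
  rw [if_neg (by omega), if_neg (by omega), if_neg (by omega), if_pos rfl]

lemma rowFun_p1 (a b c d e f g : ℤ → ℝ) (I : ℤ) : rowFun a b c d e f g I (I + 1) = e I := by
  unfold rowFun
  rw [if_neg (by omega), if_neg (by omega), if_neg (by omega), if_neg (by omega), if_pos rfl]

lemma rowFun_p2 (a b c d e f g : ℤ → ℝ) (I : ℤ) : rowFun a b c d e f g I (I + 2) = f I := by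
  unfold rowFun
  rw [if_neg (by omega), if_neg (by omega), if_neg (by omega), if_neg (by omega),
    if_neg (by omega), if_pos rfl]

lemma rowFun_p3 (a b c d e f g : ℤ → ℝ) (I : ℤ) : rowFun a b c d e f g I (I + 3) = g I := by
  unfold rowFun
  rw [if_neg (by omega), if_neg (by omega), if_neg (by omega), if_neg (by omega),
    if_neg (by omega), if_neg (by omega), if_pos rfl]

lemma rowFun_out (a b c d e f g : ℤ → ℝ) (I k : ℤ) (h : k < I - 3 ∨ I + 3 < k) :
    rowFun a b c d e f g I k = 0 := by
  unfold rowFun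
  split_ifs <;> first | omega | rfl

lemma hepta_mulVec_row (n : ℕ) (a b c d e f g : ℤ → ℝ) (W : ℤ → ℝ)
    (hW : SevenTermRec n a b c d e f g W)
    (h1 : W ((n : ℤ) + 1) = 0) (h2 : W ((n : ℤ) + 2) = 0) (h3 : W ((n : ℤ) + 3) = 0)
    (i : Fin n) :
    (heptaMatrix n a b c d e f g).mulVec (fun j => W ((j : ℤ) + 1)) i = 0 := by
  have hilt := i.isLt
  have hn0 : 0 < n := i.pos
  set I : ℤ := (i : ℤ) + 1 with hIdef
  have hI1 : 1 ≤ I := by omega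
  have hIn : I ≤ (n : ℤ) := by omega
  have hrow : ∀ j : Fin n, heptaMatrix n a b c d e f g i j =
      rowFun a b c d e f g I ((j : ℤ) + 1) := fun j => rfl
  have key : (heptaMatrix n a b c d e f g).mulVec (fun j => W ((j : ℤ) + 1)) i =
      ∑ k ∈ Finset.Icc (1 : ℤ) (n : ℤ), rowFun a b c d e f g I k * W k := by
    simp only [Matrix.mulVec, dotProduct, hrow]
    refine Finset.sum_nbij' (fun j : Fin n => (j : ℤ) + 1)
      (fun k : ℤ => ⟨min (k.toNat - 1) (n - 1), by omega⟩) ?_ ?_ ?_ ?_ ?_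
    · intro j _; simp only [Finset.mem_Icc]; omega
    · intro k _; exact Finset.mem_univ _
    · intro j _
      have := j.isLt
      ext
      simp only []
      omega
    · intro k hk
      simp only [Finset.mem_Icc] at hk
      simp only []
      omega
    · intro j _; rfl
  rw [key]
  have hsub1 : ∑ k ∈ Finset.Icc (1 : ℤ) (n : ℤ), rowFun a b c d e f g I k * W k =
      ∑ k ∈ Finset.Icc (1 : ℤ) (n : ℤ) ∪ Finset.Icc (I - 3) (I + 3),
        rowFun a b c d e f g I k * W k := by
    refine Finset.sum_subset Finset.subset_union_left ?_
    intro k hk hk'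
    simp [Finset.mem_Icc] at hk hk'
    rcases hk with hk | hk
    · omega
    · have hWk : W k = 0 := by
        rcases Classical.em (k ≤ 0) with h | h
        · exact hW.1 k h
        · have : k = (n : ℤ) + 1 ∨ k = (n : ℤ) + 2 ∨ k = (n : ℤ) + 3 := by omega
          rcases this with h | h | h <;> rw [h] <;> assumption
      rw [hWk, mul_zero]
  have hsub2 : ∑ k ∈ Finset.Icc (1 : ℤ) (n : ℤ) ∪ Finset.Icc (I - 3) (I + 3),
        rowFun a b c d e f g I k * W k =
      ∑ k ∈ Finset.Icc (I - 3) (I + 3), rowFun a b c d e f g I k * W k := by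
    refine (Finset.sum_subset Finset.subset_union_right ?_).symm
    intro k hk hk'
    simp [Finset.mem_Icc] at hk hk'
    rw [rowFun_out a b c d e f g I k (by omega), zero_mul]
  rw [hsub1, hsub2]
  have hset : Finset.Icc (I - 3) (I + 3) =
      {I - 3, I - 2, I - 1, I, I + 1, I + 2, I + 3} := by
    ext k
    simp only [Finset.mem_Icc, Finset.mem_insert, Finset.mem_singleton]
    omega
  rw [hset]
  rw [Finset.sum_insert (by simp only [Finset.mem_insert, Finset.mem_singleton]; omega), Finset.sum_insert (by simp only [Finset.mem_insert, Finset.mem_singleton]; omega),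
    Finset.sum_insert (by simp only [Finset.mem_insert, Finset.mem_singleton]; omega), Finset.sum_insert (by simp only [Finset.mem_insert, Finset.mem_singleton]; omega),
    Finset.sum_insert (by simp only [Finset.mem_insert, Finset.mem_singleton]; omega), Finset.sum_insert (by simp only [Finset.mem_insert, Finset.mem_singleton]; omega),
    Finset.sum_singleton]
  rw [rowFun_m3, rowFun_m2, rowFun_m1, rowFun_0, rowFun_p1, rowFun_p2, rowFun_p3]
  linear_combination hW.2 I hI1 hIn

theorem stmt_5 (n : ℕ) (hn : 4 < n) (a b c d e f g A B C : ℤ → ℝ)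
    (hg : ∀ i : ℤ, 1 ≤ i → i ≤ (n : ℤ) - 3 → g i ≠ 0)
    (hg1 : g ((n : ℤ) - 2) = 1) (hg2 : g ((n : ℤ) - 1) = 1) (hg3 : g (n : ℤ) = 1)
    (hf1 : f ((n : ℤ) - 1) = 0) (hf2 : f (n : ℤ) = 0) (he1 : e (n : ℤ) = 0)
    (hA : SevenTermRec n a b c d e f g A) (hA1 : A 1 = 0) (hA2 : A 2 = 0) (hA3 : A 3 = 1)
    (hB : SevenTermRec n a b c d e f g B) (hB1 : B 1 = 0) (hB2 : B 2 = 1) (hB3 : B 3 = 0)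
    (hC : SevenTermRec n a b c d e f g C) (hC1 : C 1 = 1) (hC2 : C 2 = 0) (hC3 : C 3 = 0)
    (hX : det3 A B C ((n : ℤ) + 1) ((n : ℤ) + 2) ((n : ℤ) + 3) = 0) :
    (heptaMatrix n a b c d e f g).det = 0 := by
  -- obtain a nonzero left kernel vector of the 3×3 matrix
  obtain ⟨u, hu0, hu⟩ := Matrix.exists_vecMul_eq_zero_iff.mpr hX
  set W : ℤ → ℝ := fun k => u 0 * A k + u 1 * B k + u 2 * C k with hWdef
  have hWrec : SevenTermRec n a b c d e f g W := by
    constructor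
    · intro j hj
      simp only [hWdef, hA.1 j hj, hB.1 j hj, hC.1 j hj, mul_zero, add_zero]
    · intro i h1 h2
      have ha := hA.2 i h1 h2
      have hb := hB.2 i h1 h2
      have hc := hC.2 i h1 h2
      have : u 0 * (a i * A (i - 3) + b i * A (i - 2) + c i * A (i - 1) + d i * A i +
          e i * A (i + 1) + f i * A (i + 2) + g i * A (i + 3)) +
        u 1 * (a i * B (i - 3) + b i * B (i - 2) + c i * B (i - 1) + d i * B i +
          e i * B (i + 1) + f i * B (i + 2) + g i * B (i + 3)) +
        u 2 * (a i * C (i - 3) + b i * C (i - 2) + c i * C (i - 1) + d i * C i +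
          e i * C (i + 1) + f i * C (i + 2) + g i * C (i + 3)) = 0 := by
        rw [ha, hb, hc]; ring
      simp only [hWdef]
      linear_combination this
  have hval : ∀ j : Fin 3, u 0 * (!![A ((n:ℤ)+1), A ((n:ℤ)+2), A ((n:ℤ)+3);
        B ((n:ℤ)+1), B ((n:ℤ)+2), B ((n:ℤ)+3);
        C ((n:ℤ)+1), C ((n:ℤ)+2), C ((n:ℤ)+3)]) 0 j +
      u 1 * (!![A ((n:ℤ)+1), A ((n:ℤ)+2), A ((n:ℤ)+3);
        B ((n:ℤ)+1), B ((n:ℤ)+2), B ((n:ℤ)+3);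
        C ((n:ℤ)+1), C ((n:ℤ)+2), C ((n:ℤ)+3)]) 1 j +
      u 2 * (!![A ((n:ℤ)+1), A ((n:ℤ)+2), A ((n:ℤ)+3);
        B ((n:ℤ)+1), B ((n:ℤ)+2), B ((n:ℤ)+3);
        C ((n:ℤ)+1), C ((n:ℤ)+2), C ((n:ℤ)+3)]) 2 j = 0 := by
    intro j
    have := congrFun hu j
    simp only [Matrix.vecMul, dotProduct, Fin.sum_univ_three, Pi.zero_apply] at this
    linear_combination this
  have hW1 : W ((n:ℤ)+1) = 0 := by
    have := hval 0
    simpa [hWdef] using this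
  have hW2 : W ((n:ℤ)+2) = 0 := by
    have := hval 1
    simpa [hWdef] using this
  have hW3 : W ((n:ℤ)+3) = 0 := by
    have := hval 2
    simpa [hWdef] using this
  -- the candidate kernel vector
  set v : Fin n → ℝ := fun j => W ((j : ℤ) + 1) with hvdef
  have hv : (heptaMatrix n a b c d e f g).mulVec v = 0 := by
    funext i
    exact hepta_mulVec_row n a b c d e f g W hWrec hW1 hW2 hW3 i
  have hvne : v ≠ 0 := by
    intro hcontr
    apply hu0
    have h3 : v ⟨2, by omega⟩ = 0 := by rw [hcontr]; rfl
    have hh2 : v ⟨1, by omega⟩ = 0 := by rw [hcontr]; rfl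
    have h1 : v ⟨0, by omega⟩ = 0 := by rw [hcontr]; rfl
    simp only [hvdef, hWdef] at h3 hh2 h1
    norm_num at h3 hh2 h1
    rw [hA1, hB1, hC1] at h1
    rw [hA2, hB2, hC2] at hh2
    rw [hA3, hB3, hC3] at h3
    funext k
    fin_cases k <;> simp_all
  exact Matrix.exists_mulVec_eq_zero_iff.mp ⟨v, hvne, hv⟩
end
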